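/- arXiv:1607.07366 — 7 statements merged into one kernel-verified Lean document; each statement's English description precedes it below -/
import Mathlib

section
/- The class 𝔜 is closed under taking subgroups and quotients: if G belongs to 𝔜, then every subgroup of G belongs to 𝔜, and for every normal subgroup N of G the quotient group G/N belongs to 𝔜. -/
/-- A group `G` belongs to the class 𝔜 if every non-abelian subgroup of `G`
is self-normalized. -/
def IsY (G : Type*) [Group G] : Prop :=
  ∀ H : Subgroup G, (∃ a ∈ H, ∃ b ∈ H, a * b ≠ b * a) → Subgroup.normalizer (H : Set G) = H

/-! An injective homomorphism carries a non-abelian subgroup `K` to a non-abelian `f(K)`, which is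
self-normalized, and `f` maps the normalizer of `K` into that of `f(K)`. A surjective homomorphism
pulls a non-abelian `K` back to a non-abelian `f⁻¹(K)`, whose normalizer is `f⁻¹` of the
normalizer of `K`. -/

open Subgroup Function

namespace IsY

variable {G Q : Type*} [Group G] [Group Q]

theorem of_injective {f : G →* Q} (hf : Injective f) (hQ : IsY Q) : IsY G := by
  rintro K ⟨a, ha, b, hb, hab⟩
  have hself : normalizer (K.map f : Set Q) = K.map f :=
    hQ _ ⟨f a, mem_map_of_mem f ha, f b, mem_map_of_mem f hb, by
      rwa [← map_mul, ← map_mul, hf.ne_iff]⟩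
  refine le_antisymm ?_ K.le_normalizer
  calc normalizer (K : Set G)
      ≤ ((normalizer (K : Set G)).map f).comap f := le_comap_map f _
    _ ≤ (normalizer (K.map f : Set Q)).comap f := comap_mono (le_normalizer_map f)
    _ = K := by rw [hself, comap_map_eq_self_of_injective hf]

theorem of_surjective {f : G →* Q} (hf : Surjective f) (hG : IsY G) : IsY Q := by
  rintro K ⟨a, ha, b, hb, hab⟩
  obtain ⟨a, rfl⟩ := hf a
  obtain ⟨b, rfl⟩ := hf b
  have hself : normalizer (K.comap f : Set G) = K.comap f :=
    hG _ ⟨a, ha, b, hb, fun h => hab (by rw [← map_mul, h, map_mul])⟩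
  rw [← comap_normalizer_eq_of_surjective K hf] at hself
  exact comap_injective hf hself

end IsY

theorem stmt_0 {G : Type*} [Group G] (hG : IsY G) :
    (∀ H : Subgroup G, IsY H) ∧
    (∀ (N : Subgroup G) [N.Normal], IsY (G ⧸ N)) :=
  ⟨fun H => hG.of_injective H.subtype_injective,
    fun N _ => hG.of_surjective (QuotientGroup.mk'_surjective N)⟩
end

section
/- Every non-abelian group in 𝔜 is directly indecomposable: if a non-abelian group G belongs to 𝔜 and G is isomorphic to a direct product H × K of two groups H and K, then H is trivial or K is trivial. -/
namespace IsY

variable {G : Type*} [Group G]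

theorem eq_top_of_normal (hG : IsY G) {N : Subgroup G} [N.Normal]
    (hN : ∃ a ∈ N, ∃ b ∈ N, a * b ≠ b * a) : N = ⊤ := by
  rw [← hG N hN, Subgroup.normalizer_eq_top_iff]
  infer_instance

theorem eq_one_of_mulEquiv_prod {H K : Type*} [Group H] [Group K] (hG : IsY G)
    (e : G ≃* H × K) (hH : ∃ a b : H, a * b ≠ b * a) (k : K) : k = 1 := by
  obtain ⟨a, b, hab⟩ := hH
  let π : G →* K := (MonoidHom.snd H K).comp e.toMonoidHom
  have hπ : ∀ h : H, e.symm (h, 1) ∈ π.ker := fun h => by simp [π, Subgroup.mem_prod]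
  have hker : π.ker = ⊤ := by
    refine hG.eq_top_of_normal ⟨_, hπ a, _, hπ b, fun hcomm => hab ?_⟩
    simpa using congrArg (fun g => (e g).1) hcomm
  have hk : e.symm (1, k) ∈ π.ker := hker ▸ Subgroup.mem_top _
  simpa [π, Subgroup.mem_prod] using hk

end IsY

theorem stmt_2 {G H K : Type*} [Group G] [Group H] [Group K]
    (hG : IsY G) (hna : ∃ a b : G, a * b ≠ b * a) (e : G ≃* H × K) :
    (∀ h : H, h = 1) ∨ (∀ k : K, k = 1) := by
  by_cases hH : ∃ a b : H, a * b ≠ b * a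
  · exact Or.inr (hG.eq_one_of_mulEquiv_prod e hH)
  by_cases hK : ∃ a b : K, a * b ≠ b * a
  · exact Or.inl (hG.eq_one_of_mulEquiv_prod (e.trans MulEquiv.prodComm) hK)
  push Not at hH hK
  obtain ⟨a, b, hab⟩ := hna
  exact absurd (e.injective (by simp [Prod.ext_iff, hH, hK])) hab
end

section
/- If a group G belongs to 𝔜, then every proper subnormal subgroup of G is abelian: if H is a proper subgroup of G and there exists a finite chain of subgroups H = K_0 ≤ K_1 ≤ ... ≤ K_n = G in which each K_i is a normal subgroup of K_{i+1}, then H is abelian. -/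
namespace Subgroup

variable {G : Type*} [Group G]

theorem eq_of_normal_subgroupOf_of_normalizer_eq {H K : Subgroup G}
    (hN : normalizer (H : Set G) = H) (hle : H ≤ K) (hK : (H.subgroupOf K).Normal) : K = H :=
  le_antisymm (hN ▸ (normal_subgroupOf_iff_le_normalizer hle).mp hK) hle

theorem chain_eq_of_normalizer_eq {H : Subgroup G} (hN : normalizer (H : Set G) = H)
    {n : ℕ} (K : Fin (n + 1) → Subgroup G) (h0 : K 0 = H)
    (hchain : ∀ i : Fin n, K i.castSucc ≤ K i.succ ∧
      ((K i.castSucc).subgroupOf (K i.succ)).Normal) :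
    ∀ i, K i = H := by
  intro i
  induction i using Fin.induction with
  | zero => exact h0
  | succ i ih =>
    obtain ⟨hle, hnormal⟩ := hchain i
    rw [ih] at hle hnormal
    exact eq_of_normal_subgroupOf_of_normalizer_eq hN hle hnormal

end Subgroup

theorem stmt_3 {G : Type*} [Group G] (hG : IsY G) (H : Subgroup G) (hH : H ≠ ⊤)
    (n : ℕ) (K : Fin (n + 1) → Subgroup G)
    (h0 : K 0 = H) (hlast : K (Fin.last n) = ⊤)
    (hchain : ∀ i : Fin n, K i.castSucc ≤ K i.succ ∧
      ((K i.castSucc).subgroupOf (K i.succ)).Normal) :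
    ∀ a ∈ H, ∀ b ∈ H, a * b = b * a := by
  by_contra! hnonabelian
  have hN : Subgroup.normalizer (H : Set G) = H := hG H hnonabelian
  exact hH (hlast ▸ Subgroup.chain_eq_of_normalizer_eq hN K h0 hchain (Fin.last n)).symm
end

section
/- If a group G belongs to 𝔜 and G is not perfect (i.e., the commutator subgroup [G,G] is a proper subgroup of G), then G is metabelian, i.e., the commutator subgroup [G,G] is abelian. -/
theorem IsY.eq_top_of_normal_s4 {G : Type*} [Group G] (hG : IsY G) {H : Subgroup G} [H.Normal]
    (hH : ∃ a ∈ H, ∃ b ∈ H, a * b ≠ b * a) : H = ⊤ :=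
  (hG H hH).symm.trans (Subgroup.normalizer_eq_top_iff.mpr ‹_›)

theorem IsY.mul_comm_of_normal_of_ne_top {G : Type*} [Group G] (hG : IsY G) {H : Subgroup G}
    [H.Normal] (hH : H ≠ ⊤) : ∀ a ∈ H, ∀ b ∈ H, a * b = b * a := by
  intro a ha b hb
  by_contra hab
  exact hH (hG.eq_top_of_normal_s4 ⟨a, ha, b, hb, hab⟩)

theorem stmt_4 {G : Type*} [Group G] (hG : IsY G) (hnp : commutator G ≠ ⊤) :
    ∀ a ∈ commutator G, ∀ b ∈ commutator G, a * b = b * a :=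
  hG.mul_comm_of_normal_of_ne_top hnp
end

section
/- Let G be a nilpotent group. Then G belongs to 𝔜 if and only if G is either abelian, or a finite minimal non-abelian p-group for some prime p (i.e., G is a finite non-abelian group of p-power order all of whose proper subgroups are abelian). -/
open Subgroup
open scoped commutatorElement

section

variable {G : Type*} [Group G]

theorem commutatorElement_zpow_left {x y : G} (hc : ⁅x, y⁆ ∈ center G) (m : ℤ) :
    ⁅x ^ m, y⁆ = ⁅x, y⁆ ^ m := by
  have hxc : Commute x ⁅x, y⁆ := mem_center_iff.mp hc x
  have hconj : y * x * y⁻¹ = ⁅x, y⁆⁻¹ * x := by rw [commutatorElement_def]; group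
  calc ⁅x ^ m, y⁆ = x ^ m * (y * x * y⁻¹) ^ (-m) := by
        rw [conj_zpow, commutatorElement_def, zpow_neg]; group
    _ = x ^ m * (⁅x, y⁆ ^ m * x ^ (-m)) := by
        rw [hconj, hxc.symm.inv_left.mul_zpow, inv_zpow', neg_neg]
    _ = ⁅x, y⁆ ^ m := by rw [← mul_assoc, (hxc.zpow_zpow m m).eq]; group

theorem commutatorElement_zpow_zpow {x y : G} (hc : ⁅x, y⁆ ∈ center G) (m n : ℤ) :
    ⁅x ^ m, y ^ n⁆ = ⁅x, y⁆ ^ (m * n) := by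
  have hc' : ⁅y, x ^ m⁆ ∈ center G := by
    rw [← commutatorElement_inv, commutatorElement_zpow_left hc]
    exact inv_mem (zpow_mem hc m)
  rw [← commutatorElement_inv, commutatorElement_zpow_left hc', ← commutatorElement_inv,
    commutatorElement_zpow_left hc, inv_zpow', ← zpow_mul, ← zpow_neg]
  ring_nf

theorem exists_isCoprime_of_mem_closure_zpow_pair {A : Type*} [CommGroup A] {α β : A} {r : ℤ}
    (hα : α ∈ closure {α ^ r, β ^ r}) (hβ : β ∈ closure {α ^ r, β ^ r}) :
    ∃ D : ℤ, IsCoprime D r ∧ ∀ g ∈ closure {α, β}, g ^ D = 1 := by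
  obtain ⟨i, j, hij⟩ := mem_closure_pair.mp hα
  obtain ⟨k, l, hkl⟩ := mem_closure_pair.mp hβ
  simp only [← zpow_mul] at hij hkl
  have hα' : α ^ (1 - r * i) = β ^ (r * j) := by
    rw [zpow_sub, zpow_one]
    nth_rewrite 1 [← hij]
    exact mul_inv_cancel_comm _ _
  have hβ' : β ^ (1 - r * l) = α ^ (r * k) := by
    rw [zpow_sub, zpow_one]
    nth_rewrite 1 [← hkl]
    exact mul_inv_cancel_right _ _
  -- `D` is the determinant of `1 - r • M`, where `M` expresses `α, β` through `α ^ r, β ^ r`.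
  have hαD : α ^ ((1 - r * i) * (1 - r * l) - r * k * (r * j)) = 1 :=
    calc _ = (α ^ (1 - r * i)) ^ (1 - r * l) * ((α ^ (r * k)) ^ (r * j))⁻¹ := by
          rw [← zpow_mul, ← zpow_mul, ← zpow_sub]
      _ = 1 := by rw [hα', ← hβ', ← zpow_mul, ← zpow_mul, mul_comm (r * j), mul_inv_cancel]
  have hβD : β ^ ((1 - r * i) * (1 - r * l) - r * k * (r * j)) = 1 :=
    calc _ = (β ^ (1 - r * l)) ^ (1 - r * i) * ((β ^ (r * j)) ^ (r * k))⁻¹ := by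
          rw [← zpow_mul, ← zpow_mul, ← zpow_sub]; ring_nf
      _ = 1 := by rw [hβ', ← hα', ← zpow_mul, ← zpow_mul, mul_comm (r * k), mul_inv_cancel]
  refine ⟨(1 - r * i) * (1 - r * l) - r * k * (r * j),
    ⟨1, i + l - r * i * l + r * k * j, by ring⟩, fun g hg => ?_⟩
  obtain ⟨m, n, rfl⟩ := mem_closure_pair.mp hg
  rw [mul_zpow, ← zpow_mul, ← zpow_mul, mul_comm m, mul_comm n, zpow_mul, zpow_mul, hαD, hβD,
    one_zpow, one_zpow, mul_one]

theorem mul_comm_of_closure_pair_eq_top {x y : G} (hxy : Commute x y)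
    (htop : closure {x, y} = ⊤) (g h : G) : g * h = h * g := by
  have := isMulCommutative_closure (k := {x, y}) (by
    rintro u (rfl | rfl) v (rfl | rfl) <;> first | rfl | exact hxy | exact hxy.symm)
  rw [htop] at this
  exact setLike_mul_comm (mem_top g) (mem_top h)

theorem closure_pair_map_eq_top {H : Type*} [Group H] {f : G →* H} (hf : Function.Surjective f)
    {x y : G} (htop : closure {x, y} = ⊤) : closure {f x, f y} = ⊤ := by
  rw [← Set.image_pair, ← MonoidHom.map_closure, htop, map_top_of_surjective f hf]

theorem commutatorElement_mem_center_of_isNilpotent [Group.IsNilpotent G]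
    (hgen : ∀ x y : G, ¬Commute x y → closure {x, y} = ⊤) (g h : G) : ⁅g, h⁆ ∈ center G := by
  set π := QuotientGroup.mk' (center G)
  rw [← QuotientGroup.ker_mk' (center G), MonoidHom.mem_ker, map_commutatorElement,
    commutatorElement_eq_one_iff_mul_comm]
  by_contra hgh
  have : Nontrivial (G ⧸ center G) := ⟨⟨_, _, hgh⟩⟩
  -- `y` is central modulo `Z(G)` but not central, so `G = ⟨x, y⟩` is abelian modulo `Z(G)`.
  obtain ⟨q, hq, hq1⟩ :=
    (bot_or_exists_ne_one _).resolve_left (Group.IsNilpotent.center_ne_bot (G ⧸ center G))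
  obtain ⟨y, rfl⟩ := QuotientGroup.mk'_surjective (center G) q
  obtain ⟨x, hxy⟩ : ∃ x, ¬Commute x y := by
    by_contra! hy
    exact hq1 ((QuotientGroup.eq_one_iff y).mpr (mem_center_iff.mpr hy))
  exact hgh (mul_comm_of_closure_pair_eq_top (mem_center_iff.mp hq (π x))
    (closure_pair_map_eq_top (QuotientGroup.mk'_surjective _) (hgen x y hxy)) _ _)

theorem normal_of_le_center {N : Subgroup G} (hN : N ≤ center G) : N.Normal :=
  ⟨fun n hn g => by rwa [mem_center_iff.mp (hN hn) g, mul_inv_cancel_right]⟩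

abbrev commGroupQuotientZPowers {a b : G} (hc : ⁅a, b⁆ ∈ center G) (htop : closure {a, b} = ⊤) :
    CommGroup (G ⧸ zpowers ⁅a, b⁆) :=
  haveI := normal_of_le_center (zpowers_le.mpr hc)
  { mul_comm := mul_comm_of_closure_pair_eq_top (x := (a : G ⧸ zpowers ⁅a, b⁆)) (y := b)
      (by rw [← commutatorElement_eq_one_iff_commute, ← QuotientGroup.mk'_apply,
          ← QuotientGroup.mk'_apply, ← map_commutatorElement, ← MonoidHom.mem_ker,
          QuotientGroup.ker_mk']; exact mem_zpowers _)
      (closure_pair_map_eq_top (QuotientGroup.mk'_surjective _) htop) }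

theorem orderOf_ne_zero_and_not_dvd {g : G} {E : ℤ} {r : ℕ} (hr : r.Prime) (hE : IsCoprime E r)
    (hg : g ^ E = 1) : orderOf g ≠ 0 ∧ ¬r ∣ orderOf g := by
  have hdvd : (orderOf g : ℤ) ∣ E := orderOf_dvd_iff_zpow_eq_one.mpr hg
  have hrE : ¬(r : ℤ) ∣ E := fun h =>
    (Nat.prime_iff_prime_int.mp hr).not_isUnit (hE.isUnit_of_dvd' h dvd_rfl)
  refine ⟨fun h0 => hrE ?_, fun h => hrE ((Int.natCast_dvd_natCast.mpr h).trans hdvd)⟩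
  rw [h0, Nat.cast_zero, zero_dvd_iff] at hdvd
  exact hdvd ▸ dvd_zero _

theorem isPGroup_of_forall_prime_ne {p : ℕ}
    (h : ∀ r : ℕ, r.Prime → r ≠ p → ∃ E : ℤ, IsCoprime E r ∧ ∀ g : G, g ^ E = 1) :
    IsPGroup p G := by
  intro g
  obtain ⟨r, hpr, hr⟩ := Nat.exists_infinite_primes (p + 1)
  obtain ⟨E, hE, hEg⟩ := h r hr (by omega)
  have hpow := Nat.eq_prime_pow_of_unique_prime_dvd (orderOf_ne_zero_and_not_dvd hr hE (hEg g)).1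
    fun {q} hq hqg => by
      by_contra hqp
      obtain ⟨E', hE', hE'g⟩ := h q hq hqp
      exact (orderOf_ne_zero_and_not_dvd hq hE' (hE'g g)).2 hqg
  exact ⟨_, hpow ▸ pow_orderOf_eq_one g⟩

section MinimalNonAbelian

variable (hcent : ∀ g h : G, ⁅g, h⁆ ∈ center G)
  (hgen : ∀ x y : G, ¬Commute x y → closure {x, y} = ⊤)
include hcent hgen

theorem exists_isCoprime_forall_zpow_eq_one {a b : G} {r : ℤ} (hr : ⁅a, b⁆ ^ (r * r) ≠ 1) :
    ∃ E : ℤ, IsCoprime E r ∧ ∀ g : G, g ^ E = 1 := by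
  have hgen_pow : closure {a ^ r, b ^ r} = ⊤ := by
    refine hgen _ _ fun h => hr ?_
    rwa [← commutatorElement_zpow_zpow (hcent a b), commutatorElement_eq_one_iff_commute]
  have hgen_ab : closure {a, b} = ⊤ := by
    refine hgen _ _ fun h => hr ?_
    rw [(commutatorElement_eq_one_iff_commute.mpr h), one_zpow]
  set N := zpowers ⁅a, b⁆
  have hN : N ≤ center G := zpowers_le.mpr (hcent a b)
  have := normal_of_le_center hN
  let := commGroupQuotientZPowers (hcent a b) hgen_ab
  set π := QuotientGroup.mk' N
  have hπ : Function.Surjective π := QuotientGroup.mk'_surjective N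
  obtain ⟨D, hD, hDg⟩ := exists_isCoprime_of_mem_closure_zpow_pair (α := π a) (β := π b) (r := r)
    (by rw [← map_zpow, ← map_zpow, closure_pair_map_eq_top hπ hgen_pow]; trivial)
    (by rw [← map_zpow, ← map_zpow, closure_pair_map_eq_top hπ hgen_pow]; trivial)
  have hmem : ∀ g : G, g ^ D ∈ N := fun g => by
    rw [← QuotientGroup.ker_mk' N, MonoidHom.mem_ker, map_zpow]
    exact hDg _ (by rw [closure_pair_map_eq_top hπ hgen_ab]; trivial)
  have hD1 : ⁅a, b⁆ ^ D = 1 := by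
    rw [← commutatorElement_zpow_left (hcent a b), commutatorElement_eq_one_iff_commute]
    exact (mem_center_iff.mp (hN (hmem a)) b).symm
  refine ⟨D * D, hD.mul_left hD, fun g => ?_⟩
  obtain ⟨k, hk⟩ := mem_zpowers_iff.mp (hmem g)
  rw [zpow_mul, ← hk, ← zpow_mul, mul_comm, zpow_mul, hD1, one_zpow]

theorem finite_of_isMulTorsion {a b : G} (hab : ¬Commute a b) (htors : IsMulTorsion G) :
    Finite G := by
  set N := zpowers ⁅a, b⁆
  have hgen_ab := hgen a b hab
  have := normal_of_le_center (zpowers_le.mpr (hcent a b))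
  have : Finite N := (htors _).finite_zpowers
  let := commGroupQuotientZPowers (hcent a b) hgen_ab
  have : Group.FG (G ⧸ N) := Group.fg_iff.mpr ⟨_, closure_pair_map_eq_top
    (QuotientGroup.mk'_surjective N) hgen_ab, Set.toFinite _⟩
  have : Finite (G ⧸ N) := CommGroup.finite_of_fg_isMulTorsion _ fun q => by
    obtain ⟨g, rfl⟩ := QuotientGroup.mk'_surjective N q
    exact (QuotientGroup.mk' N).isOfFinOrder (htors g)
  exact Finite.of_subgroup_quotient N

end MinimalNonAbelian

theorem finite_and_isPGroup_of_isNilpotent [Group.IsNilpotent G]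
    (hgen : ∀ x y : G, ¬Commute x y → closure {x, y} = ⊤) {a b : G} (hab : ¬Commute a b) :
    Finite G ∧ ∃ p : ℕ, p.Prime ∧ IsPGroup p G := by
  have hcent := commutatorElement_mem_center_of_isNilpotent hgen
  have hcoprime : ∀ r : ℕ, ¬orderOf ⁅a, b⁆ ∣ r * r →
      ∃ E : ℤ, IsCoprime E r ∧ ∀ g : G, g ^ E = 1 := fun r hr =>
    exists_isCoprime_forall_zpow_eq_one hcent hgen (a := a) (b := b) (by
      rw [← Nat.cast_mul, zpow_natCast, Ne, ← orderOf_dvd_iff_pow_eq_one]; exact hr)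
  have hord : orderOf ⁅a, b⁆ ≠ 0 := by
    intro h0
    obtain ⟨E, hE, hEg⟩ := hcoprime 2 (by rw [h0]; norm_num)
    exact (orderOf_ne_zero_and_not_dvd Nat.prime_two hE (hEg _)).1 h0
  have hp : (orderOf ⁅a, b⁆).minFac.Prime := Nat.minFac_prime fun h1 =>
    hab (commutatorElement_eq_one_iff_commute.mp (orderOf_eq_one_iff.mp h1))
  have hP := isPGroup_of_forall_prime_ne fun r hr hrp => hcoprime r fun hdvd =>
    hrp ((Nat.prime_dvd_prime_iff_eq hp hr).mp
      ((hp.dvd_mul.mp ((Nat.minFac_dvd _).trans hdvd)).elim id id)).symm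
  exact ⟨finite_of_isMulTorsion hcent hgen hab fun g => hP.isOfFinOrder hp.ne_zero g, _, hp, hP⟩

theorem closure_pair_eq_top_of_forall_ne_top
    (h : ∀ H : Subgroup G, H ≠ ⊤ → ∀ a ∈ H, ∀ b ∈ H, a * b = b * a) (x y : G)
    (hxy : ¬Commute x y) : closure {x, y} = ⊤ := by
  by_contra hne
  exact hxy (h _ hne x (subset_closure (by simp)) y (subset_closure (by simp)))

theorem forall_mul_comm_of_ne_top_of_isY [Group.IsNilpotent G] (hY : IsY G) (H : Subgroup G)
    (hH : H ≠ ⊤) : ∀ a ∈ H, ∀ b ∈ H, a * b = b * a := by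
  by_contra! hne
  obtain ⟨a, ha, b, hb, hab⟩ := hne
  exact hH (normalizerCondition_iff_only_full_group_self_normalizing.mp
    Group.normalizerCondition_of_isNilpotent H (hY H ⟨a, ha, b, hb, hab⟩))

theorem isY_of_forall_ne_top (h : ∀ H : Subgroup G, H ≠ ⊤ → ∀ a ∈ H, ∀ b ∈ H, a * b = b * a) :
    IsY G := by
  rintro H ⟨a, ha, b, hb, hab⟩
  obtain rfl : H = ⊤ := by
    by_contra hH
    exact hab (h H hH a ha b hb)
  exact normalizer_eq_top_iff.mpr inferInstance

end

theorem stmt_7 {G : Type*} [Group G] (hG : Group.IsNilpotent G) :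
    IsY G ↔ (∀ a b : G, a * b = b * a) ∨
      (Finite G ∧ (∃ a b : G, a * b ≠ b * a) ∧ ∃ p : ℕ, p.Prime ∧ IsPGroup p G ∧
        ∀ H : Subgroup G, H ≠ ⊤ → ∀ a ∈ H, ∀ b ∈ H, a * b = b * a) := by
  constructor
  · intro hY
    have habel := forall_mul_comm_of_ne_top_of_isY hY
    by_cases hcomm : ∀ a b : G, a * b = b * a
    · exact .inl hcomm
    push Not at hcomm
    obtain ⟨a, b, hab⟩ := hcomm
    obtain ⟨hfin, p, hp, hP⟩ :=
      finite_and_isPGroup_of_isNilpotent (closure_pair_eq_top_of_forall_ne_top habel) hab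
    exact .inr ⟨hfin, ⟨a, b, hab⟩, p, hp, hP, habel⟩
  · rintro (hcomm | ⟨-, -, -, -, -, habel⟩)
    · rintro H ⟨a, -, b, -, hab⟩
      exact absurd (hcomm a b) hab
    · exact isY_of_forall_ne_top habel
end

section
/- Let p be a prime, let A be an additively written abelian group, and let θ be an automorphism of A of order exactly p. If the endomorphism of A given by a ↦ a − θ(a) is surjective, then A = pA, i.e., A is p-divisible: every element of A is p times some element of A. -/
theorem exists_one_sub_pow_eq_mul_of_pow_eq_one {R : Type*} [Ring R] {p : ℕ} (hp : p.Prime)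
    {x : R} (hx : x ^ p = 1) : ∃ r, (1 - x) ^ p = p * r := by
  -- expand `1 = ((1 - x) + x) ^ p` and cancel `x ^ p = 1`
  obtain ⟨r, hr⟩ := ((Commute.one_left x).sub_left (Commute.refl x)).exists_add_pow_prime_eq hp
  rw [sub_add_cancel, one_pow, hx, mul_assoc, mul_assoc] at hr
  refine ⟨-((1 - x) * (x * r)), ?_⟩
  rw [mul_neg, eq_neg_iff_add_eq_zero]
  simpa [add_comm, add_left_comm] using hr.symm

theorem AddAut.coe_nsmul {A : Type*} [Add A] (θ : AddAut A) (n : ℕ) : ⇑(n • θ) = θ^[n] := by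
  induction n with
  | zero => rfl
  | succ n ih => rw [succ_nsmul, AddAut.coe_add, ih, Function.iterate_succ]

theorem AddMonoid.End.pow_addOrderOf_eq_one_of_coe_eq {A : Type*} [AddCommGroup A]
    {f : AddMonoid.End A} {θ : AddAut A} (hf : ⇑f = ⇑θ) : f ^ addOrderOf θ = 1 := by
  ext a
  rw [AddMonoid.End.coe_pow, hf, ← AddAut.coe_nsmul, addOrderOf_nsmul_eq_zero]
  rfl

theorem AddMonoid.End.exists_eq_nsmul_of_pow_eq_one {A : Type*} [AddCommGroup A] {p : ℕ}
    (hp : p.Prime) {f : AddMonoid.End A} (hf : f ^ p = 1) (hsurj : Function.Surjective ⇑(1 - f))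
    (a : A) : ∃ b, a = p • b := by
  obtain ⟨r, hr⟩ := exists_one_sub_pow_eq_mul_of_pow_eq_one hp hf
  have hsurj_pow : Function.Surjective ⇑((1 - f) ^ p) := by
    rw [AddMonoid.End.coe_pow]
    exact hsurj.iterate p
  obtain ⟨c, rfl⟩ := hsurj_pow a
  exact ⟨r c, by rw [hr]; simp⟩

theorem stmt_10 {A : Type*} [AddCommGroup A] (p : ℕ) (hp : p.Prime)
    (θ : AddAut A) (hθ : addOrderOf θ = p)
    (hsurj : Function.Surjective (fun a : A => a - θ a)) :
    ∀ a : A, ∃ b : A, a = p • b :=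
  AddMonoid.End.exists_eq_nsmul_of_pow_eq_one (f := θ.toAddMonoidHom) hp
    (hθ ▸ AddMonoid.End.pow_addOrderOf_eq_one_of_coe_eq rfl) hsurj
end

section
/- Let p be a prime and let G be a group with a non-trivial abelian normal subgroup A that is free abelian of finite rank (i.e., isomorphic to ℤ^n for some n ≥ 1) and an element x such that G is generated by x together with A, the cyclic subgroup ⟨x⟩ intersects A trivially, x^p commutes with every element of A, and conjugation by x fixes no non-trivial element of A. Then G does not belong to 𝔜. -/
open Subgroup
open scoped commutatorElement

theorem exists_sub_one_pow_eq_prime_mul {R : Type*} [Ring R] {p : ℕ} (hp : p.Prime) {t : R}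
    (ht : t ^ p = 1) : ∃ r, (t - 1) ^ p = p * r := by
  obtain ⟨r, hr⟩ := (Commute.one_left (t - 1)).exists_add_pow_prime_eq hp
  rw [add_sub_cancel, ht, one_pow, mul_one, add_assoc, left_eq_add] at hr
  exact ⟨-((t - 1) * r), by rw [mul_neg, ← mul_assoc]; exact eq_neg_of_add_eq_zero_left hr⟩

theorem Monoid.End.exists_forall_div_ne {M : Type*} [CommGroup M] {p : ℕ} (hp : p.Prime)
    {f : Monoid.End M} (hf : f ^ p = 1) {a : M} (ha : ∀ b, b ^ p ≠ a) :
    ∃ c, ∀ b, f b / b ≠ c := by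
  set t := monoidEndToAdditive M f
  obtain ⟨r, hr⟩ := exists_sub_one_pow_eq_prime_mul hp (t := t) (by rw [← map_pow, hf, map_one])
  by_contra! hsurj
  obtain ⟨w, hw⟩ := (Function.Surjective.iterate (f := ⇑(t - 1))
    (fun c => (hsurj (Additive.toMul c)).imp fun _ => congrArg Additive.ofMul) p) (Additive.ofMul a)
  rw [← AddMonoid.End.coe_pow, hr] at hw
  exact ha (Additive.toMul (r w)) (congrArg Additive.toMul hw)

theorem exists_forall_pow_ne_of_mulEquiv {M ι : Type*} [Monoid M] [DecidableEq ι]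
    (e : M ≃* Multiplicative (ι → ℤ)) (i : ι) {p : ℕ} (hp : p ≠ 1) : ∃ a : M, ∀ b, b ^ p ≠ a := by
  refine ⟨e.symm (Multiplicative.ofAdd (Pi.single i 1)), fun b hb => hp ?_⟩
  have h := congrFun (congrArg Multiplicative.toAdd (e.symm_apply_eq.mp hb.symm)) i
  simp only [toAdd_ofAdd, Pi.single_eq_same, map_pow, toAdd_pow, Pi.smul_apply,
    Int.nsmul_eq_mul] at h
  exact_mod_cast Int.eq_one_of_mul_eq_one_right (Int.natCast_nonneg p) h.symm

namespace Subgroup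

variable {G : Type*} [Group G]

theorem normal_zpowers_of_mem_center {z : G} (hz : z ∈ center G) : (zpowers z).Normal :=
  ⟨fun y hy g => by
    rwa [mem_center_iff.mp (zpowers_le.mpr hz hy) g, mul_inv_cancel_right]⟩

theorem normal_zpowers_sup_of_commutator_mem {N S : Subgroup G} [N.Normal] {x : G}
    (hS : closure {x} ⊔ S = ⊤) (hxS : ∀ s ∈ S, ⁅x, s⁆ ∈ N) : (zpowers x ⊔ N).Normal := by
  set π := QuotientGroup.mk' N
  have hcomm : ⊤ ≤ (centralizer {π x}).comap π := by
    rw [← hS, sup_le_iff, closure_le, Set.singleton_subset_iff]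
    refine ⟨mem_centralizer_singleton_iff.mpr rfl, fun s hs => ?_⟩
    have h := (QuotientGroup.eq_one_iff _).mpr (hxS s hs)
    rw [← QuotientGroup.mk'_apply, map_commutatorElement, commutatorElement_eq_one_iff_mul_comm] at h
    exact mem_centralizer_singleton_iff.mpr h.symm
  have hcent : π x ∈ center (G ⧸ N) := mem_center_iff.mpr fun q => by
    obtain ⟨g, rfl⟩ := QuotientGroup.mk'_surjective N q
    exact mem_centralizer_singleton_iff.mp (hcomm (mem_top g))
  have := (normal_zpowers_of_mem_center hcent).comap π
  rwa [← MonoidHom.map_zpowers, QuotientGroup.comap_map_mk', sup_comm] at this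

theorem zpowers_sup_inf_le {N A : Subgroup G} [N.Normal] {x : G} (hx : zpowers x ⊓ A = ⊥)
    (hN : N ≤ A) : (zpowers x ⊔ N) ⊓ A ≤ N := by
  rintro g ⟨hg, hgA⟩
  obtain ⟨y, hy, n, hn, rfl⟩ := Set.mem_mul.mp ((mul_normal _ N).le hg)
  have hyA : y ∈ A := by simpa using A.mul_mem hgA (A.inv_mem (hN hn))
  rw [(mem_bot.mp (hx.le ⟨hy, hyA⟩)), one_mul]
  exact hn

end Subgroup

open scoped IsMulCommutative

section

variable {G : Type*} [Group G] (A : Subgroup G) [A.Normal]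

def conjEnd : G →* Monoid.End A :=
  (MulDistribMulAction.toMonoidEnd (ConjAct G) A).comp ConjAct.toConjAct.toMonoidHom

theorem coe_conjEnd_apply (x : G) (a : A) : (conjEnd A x a : G) = x * a * x⁻¹ :=
  ConjAct.toConjAct_smul x a

variable [IsMulCommutative A]

def commutatorHom (x : G) : A →* A :=
  MonoidHom.mk' (fun a => conjEnd A x a / a) fun a b => by rw [map_mul, mul_div_mul_comm]

def commutatorRange (x : G) : Subgroup G := (commutatorHom A x).range.map A.subtype

variable {A}

theorem coe_commutatorHom_apply (x : G) (a : A) : (commutatorHom A x a : G) = ⁅x, (a : G)⁆ := by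
  rw [commutatorHom, MonoidHom.mk'_apply, coe_div, coe_conjEnd_apply, div_eq_mul_inv,
    commutatorElement_def]

theorem mem_commutatorRange {x g : G} : g ∈ commutatorRange A x ↔ ∃ a ∈ A, ⁅x, a⁆ = g := by
  simp only [commutatorRange, mem_map, MonoidHom.mem_range, Subgroup.coe_subtype]
  constructor
  · rintro ⟨_, ⟨a, rfl⟩, rfl⟩
    exact ⟨a, a.2, (coe_commutatorHom_apply x a).symm⟩
  · rintro ⟨a, ha, rfl⟩
    exact ⟨_, ⟨⟨a, ha⟩, rfl⟩, coe_commutatorHom_apply x ⟨a, ha⟩⟩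

theorem commutatorRange_le (x : G) : commutatorRange A x ≤ A := map_subtype_le _

theorem commutatorRange_normal {x : G} (hx : closure {x} ⊔ A = ⊤) :
    (commutatorRange A x).Normal := by
  rw [← normalizer_eq_top_iff, eq_top_iff, ← hx, sup_le_iff, closure_le, Set.singleton_subset_iff]
  constructor
  · refine mem_normalizer_iff.mpr fun g => ?_
    simp only [mem_commutatorRange]
    constructor
    · rintro ⟨a, ha, rfl⟩
      exact ⟨x * a * x⁻¹, ‹A.Normal›.conj_mem a ha x, by group⟩
    · rintro ⟨a, ha, hg⟩
      refine ⟨x⁻¹ * a * x, by simpa using ‹A.Normal›.conj_mem a ha x⁻¹, ?_⟩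
      rw [show g = x⁻¹ * (x * g * x⁻¹) * x by group, ← hg]
      group
  · calc A ≤ centralizer A := le_centralizer_iff_isMulCommutative.mpr inferInstance
      _ ≤ centralizer (commutatorRange A x) := centralizer_le (commutatorRange_le x)
      _ ≤ normalizer (commutatorRange A x : Set G) := centralizer_le_normalizer _

theorem exists_mem_notMem_commutatorRange {p : ℕ} (hp : p.Prime) {x : G}
    (hxp : ∀ a ∈ A, x ^ p * a = a * x ^ p) (hA : ∃ a : A, ∀ b, b ^ p ≠ a) :
    ∃ a ∈ A, a ∉ commutatorRange A x := by
  obtain ⟨a, ha⟩ := hA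
  have hf : conjEnd A x ^ p = 1 := by
    rw [← map_pow]
    ext b
    rw [coe_conjEnd_apply, hxp b b.2, mul_inv_cancel_right]
    rfl
  obtain ⟨c, hc⟩ := Monoid.End.exists_forall_div_ne hp hf ha
  refine ⟨c, c.2, fun h => ?_⟩
  obtain ⟨b, hb, hbc⟩ := mem_commutatorRange.mp h
  exact hc ⟨b, hb⟩ (Subtype.ext (hbc ▸ coe_commutatorHom_apply x ⟨b, hb⟩))

end

theorem stmt_11_general {G : Type*} [Group G] (p : ℕ) (hp : p.Prime)
    (A : Subgroup G) (hA : A.Normal)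
    (hfree : ∃ n : ℕ, 1 ≤ n ∧ Nonempty (A ≃* Multiplicative (Fin n → ℤ)))
    (x : G)
    (hgen : Subgroup.closure {x} ⊔ A = ⊤)
    (hint : Subgroup.zpowers x ⊓ A = ⊥)
    (hxp : ∀ a ∈ A, x ^ p * a = a * x ^ p)
    (hfpf : ∀ a ∈ A, x * a * x⁻¹ = a → a = 1) :
    ¬ IsY G := by
  intro hY
  obtain ⟨n, hn, ⟨e⟩⟩ := hfree
  have : IsMulCommutative A := ⟨⟨fun a b => e.injective (by rw [map_mul, map_mul, mul_comm])⟩⟩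
  have := commutatorRange_normal hgen
  obtain ⟨a, haA, haB⟩ := exists_mem_notMem_commutatorRange hp hxp
    (exists_forall_pow_ne_of_mulEquiv e ⟨0, hn⟩ hp.one_lt.ne')
  have hc : ⁅x, a⁆ ∈ commutatorRange A x := mem_commutatorRange.mpr ⟨a, haA, rfl⟩
  have hfix : ∀ c ∈ A, x * c = c * x → c = 1 := fun c hc h => hfpf c hc (mul_inv_eq_of_eq_mul h)
  have ha1 : a ≠ 1 := fun h => haB (h ▸ one_mem _)
  have hxc : x * ⁅x, a⁆ ≠ ⁅x, a⁆ * x := fun h =>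
    ha1 (hfix a haA (commutatorElement_eq_one_iff_mul_comm.mp (hfix _ (commutatorRange_le x hc) h)))
  have hH : (zpowers x ⊔ commutatorRange A x).Normal :=
    normal_zpowers_sup_of_commutator_mem hgen fun s hs => mem_commutatorRange.mpr ⟨s, hs, rfl⟩
  have hHtop := hY _ ⟨x, mem_sup_left (mem_zpowers x), _, mem_sup_right hc, hxc⟩
  rw [normalizer_eq_top_iff.mpr hH] at hHtop
  exact haB (zpowers_sup_inf_le hint (commutatorRange_le x) ⟨hHtop ▸ mem_top a, haA⟩)

theorem stmt_11 {G : Type*} [Group G] (p : ℕ) (hp : p.Prime)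
    (A : Subgroup G) (hA : A.Normal) (hnt : A ≠ ⊥)
    (hfree : ∃ n : ℕ, 1 ≤ n ∧ Nonempty (A ≃* Multiplicative (Fin n → ℤ)))
    (x : G)
    (hgen : Subgroup.closure {x} ⊔ A = ⊤)
    (hint : Subgroup.zpowers x ⊓ A = ⊥)
    (hxp : ∀ a ∈ A, x ^ p * a = a * x ^ p)
    (hfpf : ∀ a ∈ A, x * a * x⁻¹ = a → a = 1) :
    ¬ IsY G :=
  stmt_11_general p hp A hA hfree x hgen hint hxp hfpf
end
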